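/- Let α ∈ (0,1] and λ ∈ ℝ. The identity E_α(λ·(t+s)^α) = E_α(λ·t^α)·E_α(λ·s^α) holds for all t, s ∈ [0,∞) if and only if α = 1 or λ = 0. -/

import Mathlib

/-! Taking `t = s` turns the identity into `E_α(λ 2^α u) = E_α(λ u)^2` for `u ≥ 0`. Both sides are
differentiable at `u = 0`, and since `E_α(0) = 1` and `E_α'(0) = 1/Γ(α+1) ≠ 0`, comparing the
one-sided derivatives there gives `λ 2^α = 2λ`, i.e. `λ = 0` or `α = 1`. Differentiability holds
because `E_α` is an entire power series: truncating Euler's integral at `R` gives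
`Γ(x+1) ≥ R^x e^{-R}`, so the coefficients decay faster than any geometric sequence. -/

noncomputable def mittagLeffler (α z : ℝ) : ℝ := ∑' n : ℕ, z ^ n / Real.Gamma (α * n + 1)

noncomputable def mittagLeffler2 (α β z : ℝ) : ℝ := ∑' n : ℕ, z ^ n / Real.Gamma (α * n + β)

open Real Set MeasureTheory FormalMultilinearSeries

theorem rpow_mul_exp_neg_le_Gamma_add_one {x R : ℝ} (hx : 0 ≤ x) (hR : 0 ≤ R) :
    R ^ x * exp (-R) ≤ Gamma (x + 1) := by
  have hΓ : IntegrableOn (fun t : ℝ => exp (-t) * t ^ x) (Ioi 0) := by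
    simpa using GammaIntegral_convergent (s := x + 1) (by linarith)
  rw [Gamma_eq_integral (by linarith), add_sub_cancel_right, ← integral_exp_neg_Ioi,
    ← integral_const_mul]
  calc ∫ t in Ioi R, R ^ x * exp (-t)
      ≤ ∫ t in Ioi R, exp (-t) * t ^ x := by
        refine setIntegral_mono_on ((integrableOn_exp_neg_Ioi R).const_mul _)
          (hΓ.mono_set (Ioi_subset_Ioi hR)) measurableSet_Ioi fun t ht => ?_
        rw [mul_comm]
        gcongr
        exact ht.le
    _ ≤ ∫ t in Ioi 0, exp (-t) * t ^ x :=
        setIntegral_mono_set hΓ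
          ((ae_restrict_of_forall_mem measurableSet_Ioi) fun t (ht : 0 < t) => by positivity)
          (Ioi_subset_Ioi hR).eventuallyLE

theorem summable_pow_div_Gamma_mul_add_one {α : ℝ} (hα : 0 < α) (z : ℝ) :
    Summable fun n : ℕ => z ^ n / Gamma (α * n + 1) := by
  set ρ := |z| + 1
  have hρ : 0 < ρ := by positivity
  set R := ρ ^ α⁻¹
  have hR : 0 ≤ R := by positivity
  have hratio : |z| / ρ < 1 := (div_lt_one hρ).mpr (lt_add_one _)
  refine ((summable_geometric_of_lt_one (by positivity) hratio).mul_left (exp R)).of_norm_bounded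
    fun n => ?_
  have hRn : R ^ (α * n) = ρ ^ n := by
    rw [← rpow_mul hρ.le, inv_mul_cancel_left₀ hα.ne', rpow_natCast]
  have hΓ : ρ ^ n * exp (-R) ≤ Gamma (α * n + 1) :=
    hRn ▸ rpow_mul_exp_neg_le_Gamma_add_one (by positivity) hR
  rw [norm_div, norm_pow, norm_eq_abs, norm_of_nonneg (hΓ.trans' (by positivity)), div_pow,
    div_le_iff₀ (hΓ.trans_lt' (by positivity))]
  calc |z| ^ n = exp R * (|z| ^ n / ρ ^ n) * (ρ ^ n * exp (-R)) := by
        rw [exp_neg]; field_simp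
    _ ≤ exp R * (|z| ^ n / ρ ^ n) * Gamma (α * n + 1) := by gcongr

noncomputable def mittagLefflerSeries (α : ℝ) : FormalMultilinearSeries ℝ ℝ ℝ :=
  ofScalars ℝ fun n : ℕ => (Gamma (α * n + 1))⁻¹

theorem mittagLefflerSeries_radius {α : ℝ} (hα : 0 < α) : (mittagLefflerSeries α).radius = ⊤ :=
  radius_eq_top_of_summable_norm _ fun r => by
    simpa [mittagLefflerSeries, ofScalars_norm, div_eq_inv_mul, abs_of_nonneg]
      using (summable_pow_div_Gamma_mul_add_one hα r).abs

theorem mittagLeffler_eq_sum (α : ℝ) : mittagLeffler α = (mittagLefflerSeries α).sum := by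
  ext z
  simp [mittagLeffler, mittagLefflerSeries, ← ofScalarsSum.eq_1, ofScalars_sum_eq, div_eq_inv_mul]

theorem hasFPowerSeriesOnBall_mittagLeffler {α : ℝ} (hα : 0 < α) :
    HasFPowerSeriesOnBall (mittagLeffler α) (mittagLefflerSeries α) 0 ⊤ := by
  simpa [mittagLeffler_eq_sum, mittagLefflerSeries_radius hα]
    using (mittagLefflerSeries α).hasFPowerSeriesOnBall (by simp [mittagLefflerSeries_radius hα])

theorem hasDerivAt_mittagLeffler_zero {α : ℝ} (hα : 0 < α) :
    HasDerivAt (mittagLeffler α) (Gamma (α + 1))⁻¹ 0 := by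
  simpa [mittagLefflerSeries, ofScalars_apply_eq] using
    (hasFPowerSeriesOnBall_mittagLeffler hα).hasFPowerSeriesAt.hasDerivAt

theorem mittagLeffler_zero (α : ℝ) : mittagLeffler α 0 = 1 := by
  rw [mittagLeffler, tsum_eq_single 0 fun n hn => by rw [zero_pow hn, zero_div]]
  simp

theorem mittagLeffler_one : mittagLeffler 1 = exp := by
  ext z
  simp [mittagLeffler, exp_eq_exp_ℝ, NormedSpace.exp_eq_tsum_div, Gamma_nat_eq_factorial]

theorem hasDerivAt_mittagLeffler_const_mul_zero {α : ℝ} (hα : 0 < α) (c : ℝ) :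
    HasDerivAt (fun u => mittagLeffler α (c * u)) (c * (Gamma (α + 1))⁻¹) 0 := by
  rw [mul_comm c]
  exact (hasDerivAt_mittagLeffler_zero hα).comp_of_eq 0 (hasDerivAt_const_mul c) (mul_zero c).symm

theorem HasDerivAt.eq_of_eqOn_Ici {F : Type*} [NormedAddCommGroup F] [NormedSpace ℝ F]
    {f g : ℝ → F} {a b : F} {x : ℝ} (hf : HasDerivAt f a x) (hg : HasDerivAt g b x)
    (hfg : EqOn f g (Ici x)) : a = b :=
  (uniqueDiffOn_Ici x x self_mem_Ici).eq_deriv _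
    (hf.hasDerivWithinAt.congr_of_mem (fun _ hy => (hfg hy).symm) self_mem_Ici)
    hg.hasDerivWithinAt

theorem mittagLeffler_two_rpow_mul_eq_sq {α lam : ℝ} (hα : 0 < α)
    (H : ∀ t s : ℝ, 0 ≤ t → 0 ≤ s →
        mittagLeffler α (lam * (t + s) ^ α)
          = mittagLeffler α (lam * t ^ α) * mittagLeffler α (lam * s ^ α))
    {u : ℝ} (hu : 0 ≤ u) :
    mittagLeffler α (lam * 2 ^ α * u) = mittagLeffler α (lam * u) ^ 2 := by
  have ht : (u ^ α⁻¹) ^ α = u := by rw [← rpow_mul hu, inv_mul_cancel₀ hα.ne', rpow_one]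
  have h := H (u ^ α⁻¹) (u ^ α⁻¹) (by positivity) (by positivity)
  rwa [← two_mul, mul_rpow zero_le_two (by positivity), ht, ← mul_assoc, ← sq] at h

theorem ml_semigroup_iff'_general (α : ℝ) (hα : 0 < α) (lam : ℝ) :
    (∀ t s : ℝ, 0 ≤ t → 0 ≤ s →
        mittagLeffler α (lam * (t + s) ^ α)
          = mittagLeffler α (lam * t ^ α) * mittagLeffler α (lam * s ^ α)) ↔
      (α = 1 ∨ lam = 0) := by
  constructor
  · intro H
    have hderiv : lam * 2 ^ α * (Gamma (α + 1))⁻¹ = 2 * (lam * (Gamma (α + 1))⁻¹) := by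
      refine (hasDerivAt_mittagLeffler_const_mul_zero hα _).eq_of_eqOn_Ici ?_
        fun u hu => mittagLeffler_two_rpow_mul_eq_sq hα H hu
      simpa [mittagLeffler_zero] using (hasDerivAt_mittagLeffler_const_mul_zero hα lam).fun_pow 2
    have hfactor : lam * (2 ^ α - 2 ^ (1 : ℝ)) * (Gamma (α + 1))⁻¹ = 0 := by
      rw [rpow_one]; linear_combination hderiv
    rcases mul_eq_zero.mp hfactor with h | hΓ
    · rcases mul_eq_zero.mp h with hlam | h2
      · exact Or.inr hlam
      · exact Or.inl ((rpow_right_inj two_pos (by norm_num)).mp (sub_eq_zero.mp h2))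
    · exact absurd hΓ (inv_pos.mpr (Gamma_pos_of_pos (by linarith))).ne'
  · rintro (rfl | rfl) t s - -
    · simp [mittagLeffler_one, mul_add, exp_add]
    · simp [mittagLeffler_zero]

theorem ml_semigroup_iff' (α : ℝ) (hα : 0 < α) (hα1 : α ≤ 1) (lam : ℝ) :
    (∀ t s : ℝ, 0 ≤ t → 0 ≤ s →
        mittagLeffler α (lam * (t + s) ^ α)
          = mittagLeffler α (lam * t ^ α) * mittagLeffler α (lam * s ^ α)) ↔
      (α = 1 ∨ lam = 0) :=
  ml_semigroup_iff'_general α hα lam
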